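/- The dynamical system (X, G_{f₀}), with f₀ the vectorial negation, is topologically transitive: for any nonempty open sets U, V ⊆ X, there exists n ≥ 0 such that G_{f₀}^n(U) ∩ V ≠ ∅. -/

import Mathlib

open scoped BigOperators

/-- Distance between environments: number of differing cells. -/
noncomputable def dE (N : ℕ) (E F : Fin N → Bool) : ℝ :=
  ∑ k : Fin N, if E k = F k then 0 else 1

/-- Distance between strategies. -/
noncomputable def dS (N : ℕ) (S T : ℕ → Fin N) : ℝ :=
  (9 / N) * ∑' k : ℕ, |((S k : ℕ) : ℝ) - ((T k : ℕ) : ℝ)| / 10 ^ (k + 1)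

/-- The distance on the phase space `X = ⟦1,N⟧^ℕ × 𝔹^N`. -/
noncomputable def dX (N : ℕ) (X Y : (ℕ → Fin N) × (Fin N → Bool)) : ℝ :=
  dE N X.2 Y.2 + dS N X.1 Y.1

/-- `F_f(k, E)` agrees with `E` except at coordinate `k`, where it is `f(E)_k`. -/
def Ff (N : ℕ) (f : (Fin N → Bool) → (Fin N → Bool)) (k : Fin N)
    (E : Fin N → Bool) : Fin N → Bool :=
  fun j => if j = k then f E k else E j

/-- The chaotic iterations map `G_f(S, E) = (σ S, F_f(S⁰, E))`. -/
def Gf (N : ℕ) (f : (Fin N → Bool) → (Fin N → Bool))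
    (X : (ℕ → Fin N) × (Fin N → Bool)) : (ℕ → Fin N) × (Fin N → Bool) :=
  (fun n => X.1 (n + 1), Ff N f (X.1 0) X.2)

/-- The vectorial boolean negation. -/
def f0 (N : ℕ) : (Fin N → Bool) → (Fin N → Bool) := fun E i => ! E i

/-- Metric openness in the phase space. -/
def IsOpenX (N : ℕ) (U : Set ((ℕ → Fin N) × (Fin N → Bool))) : Prop :=
  ∀ x ∈ U, ∃ ε > 0, ∀ y, dX N x y < ε → y ∈ U

/-!
A point `(S, E)` of `U` moves by at most `10 ^ (-m)` when its strategy is changed only from index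
`m` on. Play the first `m` moves of `S`, then flip once each cell in which the current environment
differs from a target `(T, F) ∈ V`, then continue with `T`: after finitely many iterations of
`G_{f₀}` the point lands exactly on `(T, F)`.
-/

theorem Stream'.get_take_append_appendStream_of_lt {α : Type*} (s t : Stream' α) (w : List α)
    {k m : ℕ} (hk : k < m) : (s.take m ++ w ++ₛ t).get k = s.get k := by
  rw [Stream'.get_append_left _ _ _ (by simp only [List.length_append, Stream'.length_take]; omega)]
  simp [List.getElem_append_left, hk]

section

variable {N : ℕ}

theorem Gf_iterate_length_appendStream (f : (Fin N → Bool) → (Fin N → Bool))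
    (l : List (Fin N)) (T : ℕ → Fin N) (E : Fin N → Bool) :
    (Gf N f)^[l.length] (l ++ₛ T, E) = (T, l.foldl (fun E k => Ff N f k E) E) := by
  induction l generalizing E with
  | nil => rfl
  | cons c l ih => exact ih (Ff N f c E)

theorem Ff_f0 (k : Fin N) (E : Fin N → Bool) :
    Ff N (f0 N) k E = Function.update E k (!E k) := by
  funext j
  by_cases h : j = k <;> simp [Ff, f0, h]

theorem foldl_Ff_f0_apply_of_nodup {l : List (Fin N)} (hl : l.Nodup) (E : Fin N → Bool)
    (j : Fin N) :
    l.foldl (fun E k => Ff N (f0 N) k E) E j = if j ∈ l then !E j else E j := by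
  induction l generalizing E with
  | nil => simp
  | cons c l ih =>
    obtain ⟨hc, hl⟩ := List.nodup_cons.mp hl
    rw [List.foldl_cons, ih hl, Ff_f0]
    by_cases hj : j = c
    · subst hj; simp [hc]
    · simp [hj]

theorem exists_foldl_Ff_f0_eq (E F : Fin N → Bool) :
    ∃ w : List (Fin N), w.foldl (fun E k => Ff N (f0 N) k E) E = F := by
  refine ⟨(List.finRange N).filter (fun j => E j ≠ F j), funext fun j => ?_⟩
  rw [foldl_Ff_f0_apply_of_nodup ((List.nodup_finRange N).filter _)]
  simp only [List.mem_filter, List.mem_finRange, true_and, decide_eq_true_eq]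
  cases E j <;> cases F j <;> simp

theorem dE_self (E : Fin N → Bool) : dE N E E = 0 := by
  simp [dE]

/-- Each term of the series is below `N / 10 ^ (k + 1)`, and the factor `9 / N` normalises the
geometric tail from `m` on to `10 ^ (-m)`. -/
theorem dS_le_of_forall_lt_eq {m : ℕ} {S T : ℕ → Fin N} (h : ∀ k < m, S k = T k) :
    dS N S T ≤ (1 / 10) ^ m := by
  have hN : (0 : ℝ) < N := by exact_mod_cast (S 0).pos
  set f : ℕ → ℝ := fun k => |((S k : ℕ) : ℝ) - ((T k : ℕ) : ℝ)| / 10 ^ (k + 1)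
  have hf_le : ∀ k, f k ≤ N / 10 * (1 / 10) ^ k := fun k => by
    have hdiff : |((S k : ℕ) : ℝ) - ((T k : ℕ) : ℝ)| ≤ N :=
      (abs_sub_lt_of_nonneg_of_lt (by positivity) (by exact_mod_cast (S k).isLt)
        (by positivity) (by exact_mod_cast (T k).isLt)).le
    calc f k ≤ N / 10 ^ (k + 1) := by dsimp only [f]; gcongr
      _ = N / 10 * (1 / 10) ^ k := by rw [one_div_pow, pow_succ]; field_simp
  have hgeom : Summable fun k : ℕ => (1 / 10 : ℝ) ^ k :=
    summable_geometric_of_lt_one (by norm_num) (by norm_num)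
  have hf : Summable f :=
    Summable.of_nonneg_of_le (fun k => by positivity) hf_le (hgeom.mul_left _)
  have htail : ∑' k, f k = ∑' k, f (k + m) := by
    rw [← hf.sum_add_tsum_nat_add m, Finset.sum_eq_zero fun k hk => ?_, zero_add]
    simp [f, h k (Finset.mem_range.mp hk)]
  calc dS N S T = 9 / N * ∑' k, f (k + m) := by rw [← htail]; rfl
    _ ≤ 9 / N * ∑' k, (N / 10 * (1 / 10) ^ m : ℝ) * (1 / 10) ^ k := by
      refine mul_le_mul_of_nonneg_left ?_ (by positivity)
      exact Summable.tsum_le_tsum (fun k => (hf_le _).trans_eq (by rw [pow_add]; ring))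
        ((summable_nat_add_iff m).mpr hf) (hgeom.mul_left _)
    _ = (1 / 10) ^ m := by
      rw [tsum_mul_left, tsum_geometric_of_lt_one (by norm_num) (by norm_num)]
      field_simp
      norm_num

end

theorem Gf0_transitive_general (N : ℕ)
    (U V : Set ((ℕ → Fin N) × (Fin N → Bool)))
    (hU : IsOpenX N U)
    (hUne : U.Nonempty) (hVne : V.Nonempty) :
    ∃ n : ℕ, ∃ x ∈ U, (Gf N (f0 N))^[n] x ∈ V := by
  obtain ⟨⟨S, E⟩, hx⟩ := hUne
  obtain ⟨⟨T, F⟩, hy⟩ := hVne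
  obtain ⟨ε, hε, hball⟩ := hU _ hx
  obtain ⟨m, hm⟩ : ∃ m : ℕ, (1 / 10 : ℝ) ^ m < ε := exists_pow_lt_of_lt_one hε (by norm_num)
  obtain ⟨w, hw⟩ :=
    exists_foldl_Ff_f0_eq ((Stream'.take m S).foldl (fun E k => Ff N (f0 N) k E) E) F
  set p := Stream'.take m S ++ w
  refine ⟨p.length, (p ++ₛ T, E), hball _ ?_, ?_⟩
  · calc dX N (S, E) (p ++ₛ T, E) = dS N S (p ++ₛ T) := by simp [dX, dE_self]
      _ ≤ (1 / 10) ^ m := dS_le_of_forall_lt_eq fun k hk =>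
          (Stream'.get_take_append_appendStream_of_lt S T w hk).symm
      _ < ε := hm
  · rw [Gf_iterate_length_appendStream, List.foldl_append, hw]
    exact hy

/-- `(X, G_{f₀})` is topologically transitive. -/
theorem Gf0_transitive (N : ℕ) (hN : 1 ≤ N)
    (U V : Set ((ℕ → Fin N) × (Fin N → Bool)))
    (hU : IsOpenX N U) (hV : IsOpenX N V)
    (hUne : U.Nonempty) (hVne : V.Nonempty) :
    ∃ n : ℕ, ∃ x ∈ U, (Gf N (f0 N))^[n] x ∈ V :=
  Gf0_transitive_general N U V hU hUne hVne
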